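/- Let F₁=(A₁,R₁) and F₂=(A₂,R₂) be argumentation frameworks with A₁ ∩ A₂ = ∅, and let F=(A₁∪A₂, R₁∪R₂) be their disjoint union. For all S₁ ⊆ A₁ and S₂ ⊆ A₂: S₁ ∪ S₂ is semi-stable in F if and only if S₁ is semi-stable in F₁ and S₂ is semi-stable in F₂. -/
import Mathlib


/-- A set of arguments is conflict-free w.r.t. the attack relation `R`. -/
def ConflictFree {α : Type*} (R : α → α → Prop) (S : Finset α) : Prop :=
  ∀ x ∈ S, ∀ y ∈ S, ¬ R x y

/-- An argument `x` is defended by `S` w.r.t. `R` if every attacker of `x`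
is attacked by some element of `S`. -/
def Defended {α : Type*} (R : α → α → Prop) (S : Finset α) (x : α) : Prop :=
  ∀ y, R y x → ∃ z ∈ S, R z y

/-- A set is admissible if it is conflict-free and defends all of its elements. -/
def Admissible {α : Type*} (R : α → α → Prop) (S : Finset α) : Prop :=
  ConflictFree R S ∧ ∀ x ∈ S, Defended R S x

/-- The range `E⁺_R` of a set of arguments: the set together with everything it attacks. -/
def RangeSet {α : Type*} (R : α → α → Prop) (S : Finset α) : Set α :=
  ↑S ∪ {x | ∃ s ∈ S, R s x}

/-- A set `S ⊆ A` is semi-stable in the AF `(A, R)` if it is admissible and no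
admissible set `S' ⊆ A` has strictly larger range. -/
def SemiStable {α : Type*} (A : Finset α) (R : α → α → Prop) (S : Finset α) : Prop :=
  S ⊆ A ∧ Admissible R S ∧
    ∀ S' ⊆ A, Admissible R S' → ¬ RangeSet R S ⊂ RangeSet R S'

set_option linter.unusedSectionVars false
section Aux
variable {α : Type*} [DecidableEq α]
variable {A₁ A₂ : Finset α} {R₁ R₂ : α → α → Prop}

lemma adm_union (hdisj : Disjoint A₁ A₂)
    (hR₁ : ∀ x y, R₁ x y → x ∈ A₁ ∧ y ∈ A₁)
    (hR₂ : ∀ x y, R₂ x y → x ∈ A₂ ∧ y ∈ A₂)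
    {S₁ S₂ : Finset α} (hS₁ : S₁ ⊆ A₁) (hS₂ : S₂ ⊆ A₂) :
    Admissible (fun x y => R₁ x y ∨ R₂ x y) (S₁ ∪ S₂) ↔
      Admissible R₁ S₁ ∧ Admissible R₂ S₂ := by
  have not2 : ∀ x ∈ A₁, x ∉ A₂ := fun x hx => Finset.disjoint_left.1 hdisj hx
  constructor
  · rintro ⟨hcf, hdef⟩
    refine ⟨⟨?_, ?_⟩, ?_, ?_⟩
    · exact fun x hx y hy h =>
        hcf x (Finset.mem_union_left _ hx) y (Finset.mem_union_left _ hy) (Or.inl h)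
    · intro x hx y hyx
      obtain ⟨z, hz, hzy⟩ := hdef x (Finset.mem_union_left _ hx) y (Or.inl hyx)
      have hyA : y ∈ A₁ := (hR₁ y x hyx).1
      rcases hzy with h | h
      · have hz1 : z ∈ S₁ := by
          rcases Finset.mem_union.1 hz with h' | h'
          · exact h'
          · exact absurd (hS₂ h') (not2 z (hR₁ z y h).1)
        exact ⟨z, hz1, h⟩
      · exact absurd hyA (fun hy => not2 y hy (hR₂ z y h).2)
    · exact fun x hx y hy h =>
        hcf x (Finset.mem_union_right _ hx) y (Finset.mem_union_right _ hy) (Or.inr h)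
    · intro x hx y hyx
      obtain ⟨z, hz, hzy⟩ := hdef x (Finset.mem_union_right _ hx) y (Or.inr hyx)
      have hyA : y ∈ A₂ := (hR₂ y x hyx).1
      rcases hzy with h | h
      · exact absurd hyA (not2 y (hR₁ z y h).2)
      · have hz2 : z ∈ S₂ := by
          rcases Finset.mem_union.1 hz with h' | h'
          · exact absurd (hS₁ h') (fun hn => not2 z hn (hR₂ z y h).1)
          · exact h'
        exact ⟨z, hz2, h⟩
  · rintro ⟨⟨hcf1, hdef1⟩, hcf2, hdef2⟩
    constructor
    · intro x hx y hy h
      rcases h with h | h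
      · have hx1 : x ∈ S₁ := by
          rcases Finset.mem_union.1 hx with h' | h'
          · exact h'
          · exact absurd (hS₂ h') (not2 x (hR₁ x y h).1)
        have hy1 : y ∈ S₁ := by
          rcases Finset.mem_union.1 hy with h' | h'
          · exact h'
          · exact absurd (hS₂ h') (not2 y (hR₁ x y h).2)
        exact hcf1 x hx1 y hy1 h
      · have hx2 : x ∈ S₂ := by
          rcases Finset.mem_union.1 hx with h' | h'
          · exact absurd (hS₁ h') (fun hn => not2 x hn (hR₂ x y h).1)
          · exact h'
        have hy2 : y ∈ S₂ := by
          rcases Finset.mem_union.1 hy with h' | h'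
          · exact absurd (hS₁ h') (fun hn => not2 y hn (hR₂ x y h).2)
          · exact h'
        exact hcf2 x hx2 y hy2 h
    · intro x hx y hyx
      rcases Finset.mem_union.1 hx with hx1 | hx2
      · rcases hyx with h | h
        · obtain ⟨z, hz, hzy⟩ := hdef1 x hx1 y h
          exact ⟨z, Finset.mem_union_left _ hz, Or.inl hzy⟩
        · exact absurd (hS₁ hx1) (fun hn => not2 x hn (hR₂ y x h).2)
      · rcases hyx with h | h
        · exact absurd (hS₂ hx2) (not2 x (hR₁ y x h).2)
        · obtain ⟨z, hz, hzy⟩ := hdef2 x hx2 y h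
          exact ⟨z, Finset.mem_union_right _ hz, Or.inr hzy⟩

lemma range_union
    (hR₁ : ∀ x y, R₁ x y → x ∈ A₁ ∧ y ∈ A₁)
    (hR₂ : ∀ x y, R₂ x y → x ∈ A₂ ∧ y ∈ A₂)
    (hdisj : Disjoint A₁ A₂)
    {S₁ S₂ : Finset α} (hS₁ : S₁ ⊆ A₁) (hS₂ : S₂ ⊆ A₂) :
    RangeSet (fun x y => R₁ x y ∨ R₂ x y) (S₁ ∪ S₂) =
      RangeSet R₁ S₁ ∪ RangeSet R₂ S₂ := by
  have not2 : ∀ x ∈ A₁, x ∉ A₂ := fun x hx => Finset.disjoint_left.1 hdisj hx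
  ext x
  simp only [RangeSet, Set.mem_union, Finset.coe_union, Set.mem_setOf_eq,
    Finset.mem_coe, Finset.mem_union]
  constructor
  · rintro ((h | h) | ⟨s, hs, hR⟩)
    · exact Or.inl (Or.inl h)
    · exact Or.inr (Or.inl h)
    · rcases hs with hs1 | hs2
      · rcases hR with h | h
        · exact Or.inl (Or.inr ⟨s, hs1, h⟩)
        · exact absurd (hS₁ hs1) (fun hn => not2 s hn (hR₂ s x h).1)
      · rcases hR with h | h
        · exact absurd (hS₂ hs2) (not2 s (hR₁ s x h).1)
        · exact Or.inr (Or.inr ⟨s, hs2, h⟩)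
  · rintro ((h | ⟨s, hs, hR⟩) | (h | ⟨s, hs, hR⟩))
    · exact Or.inl (Or.inl h)
    · exact Or.inr ⟨s, Or.inl hs, Or.inl hR⟩
    · exact Or.inl (Or.inr h)
    · exact Or.inr ⟨s, Or.inr hs, Or.inr hR⟩

lemma range_sub (hR : ∀ x y, R₁ x y → x ∈ A₁ ∧ y ∈ A₁)
    {S : Finset α} (hS : S ⊆ A₁) : RangeSet R₁ S ⊆ ↑A₁ := by
  rintro x (h | ⟨s, hs, h⟩)
  · exact hS h
  · exact (hR s x h).2

lemma ssub_union_left {U₁ V₁ U₂ : Set α} {B₁ B₂ : Set α} (hd : Disjoint B₁ B₂)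
    (hV₁ : V₁ ⊆ B₁) (hU₂ : U₂ ⊆ B₂) (h : U₁ ⊂ V₁) : U₁ ∪ U₂ ⊂ V₁ ∪ U₂ := by
  constructor
  · exact Set.union_subset_union_left _ h.1
  · intro hle
    obtain ⟨x, hxV, hxU⟩ := Set.not_subset.1 h.2
    rcases hle (Or.inl hxV) with h' | h'
    · exact hxU h'
    · exact hd.le_bot ⟨hV₁ hxV, hU₂ h'⟩

lemma ssub_union_split {U₁ U₂ V₁ V₂ B₁ B₂ : Set α} (hd : Disjoint B₁ B₂)
    (hU₁ : U₁ ⊆ B₁) (hU₂ : U₂ ⊆ B₂) (hV₁ : V₁ ⊆ B₁) (hV₂ : V₂ ⊆ B₂)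
    (h : U₁ ∪ U₂ ⊂ V₁ ∪ V₂) : U₁ ⊂ V₁ ∨ U₂ ⊂ V₂ := by
  have h1 : U₁ ⊆ V₁ := by
    intro x hx
    rcases h.1 (Or.inl hx) with h' | h'
    · exact h'
    · exact absurd (hV₂ h') (fun h2 => hd.le_bot ⟨hU₁ hx, h2⟩)
  have h2 : U₂ ⊆ V₂ := by
    intro x hx
    rcases h.1 (Or.inr hx) with h' | h'
    · exact absurd (hV₁ h') (fun h1' => hd.le_bot ⟨h1', hU₂ hx⟩)
    · exact h'
  obtain ⟨x, hxV, hxU⟩ := Set.not_subset.1 h.2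
  rcases hxV with h' | h'
  · exact Or.inl ⟨h1, fun hle => hxU (Or.inl (hle h'))⟩
  · exact Or.inr ⟨h2, fun hle => hxU (Or.inr (hle h'))⟩
end Aux

/-- For disjoint AFs `F₁ = (A₁,R₁)` and `F₂ = (A₂,R₂)` and their disjoint union
`F = (A₁ ∪ A₂, R₁ ∪ R₂)`: for all `S₁ ⊆ A₁`, `S₂ ⊆ A₂`, the set `S₁ ∪ S₂` is
semi-stable in `F` iff `S₁` is semi-stable in `F₁` and `S₂` is semi-stable in `F₂`. -/
theorem stmt11 {α : Type*} [DecidableEq α]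
    (A₁ A₂ : Finset α) (R₁ R₂ : α → α → Prop)
    (hdisj : Disjoint A₁ A₂)
    (hR₁ : ∀ x y, R₁ x y → x ∈ A₁ ∧ y ∈ A₁)
    (hR₂ : ∀ x y, R₂ x y → x ∈ A₂ ∧ y ∈ A₂)
    (S₁ S₂ : Finset α) (hS₁ : S₁ ⊆ A₁) (hS₂ : S₂ ⊆ A₂) :
    SemiStable (A₁ ∪ A₂) (fun x y => R₁ x y ∨ R₂ x y) (S₁ ∪ S₂) ↔
      SemiStable A₁ R₁ S₁ ∧ SemiStable A₂ R₂ S₂ := by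
  have hdc : Disjoint (↑A₁ : Set α) ↑A₂ := Finset.disjoint_coe.2 hdisj
  constructor
  · rintro ⟨hsub, hadm, hmax⟩
    obtain ⟨hA1, hA2⟩ := (adm_union hdisj hR₁ hR₂ hS₁ hS₂).1 hadm
    refine ⟨⟨hS₁, hA1, ?_⟩, hS₂, hA2, ?_⟩
    · intro S' hS' hadm' hlt
      refine hmax (S' ∪ S₂)
        (Finset.union_subset (hS'.trans Finset.subset_union_left)
          (hS₂.trans Finset.subset_union_right))
        ((adm_union hdisj hR₁ hR₂ hS' hS₂).2 ⟨hadm', hA2⟩) ?_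
      rw [range_union hR₁ hR₂ hdisj hS₁ hS₂, range_union hR₁ hR₂ hdisj hS' hS₂]
      exact ssub_union_left hdc (range_sub hR₁ hS') (range_sub hR₂ hS₂) hlt
    · intro S' hS' hadm' hlt
      refine hmax (S₁ ∪ S')
        (Finset.union_subset (hS₁.trans Finset.subset_union_left)
          (hS'.trans Finset.subset_union_right))
        ((adm_union hdisj hR₁ hR₂ hS₁ hS').2 ⟨hA1, hadm'⟩) ?_
      rw [range_union hR₁ hR₂ hdisj hS₁ hS₂, range_union hR₁ hR₂ hdisj hS₁ hS',
        Set.union_comm (RangeSet R₁ S₁) (RangeSet R₂ S₂),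
        Set.union_comm (RangeSet R₁ S₁) (RangeSet R₂ S')]
      exact ssub_union_left hdc.symm (range_sub hR₂ hS') (range_sub hR₁ hS₁) hlt
  · rintro ⟨⟨_, hA1, hmax1⟩, _, hA2, hmax2⟩
    refine ⟨Finset.union_subset_union hS₁ hS₂,
      (adm_union hdisj hR₁ hR₂ hS₁ hS₂).2 ⟨hA1, hA2⟩, ?_⟩
    intro S' hS' hadm' hlt
    have hT : S' = (S' ∩ A₁) ∪ (S' ∩ A₂) := by
      ext x
      simp only [Finset.mem_union, Finset.mem_inter]
      constructor
      · intro hx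
        rcases Finset.mem_union.1 (hS' hx) with h | h
        · exact Or.inl ⟨hx, h⟩
        · exact Or.inr ⟨hx, h⟩
      · rintro (⟨h, _⟩ | ⟨h, _⟩) <;> exact h
    rw [hT] at hadm' hlt
    obtain ⟨hT1, hT2⟩ := (adm_union hdisj hR₁ hR₂ Finset.inter_subset_right
      Finset.inter_subset_right).1 hadm'
    rw [range_union hR₁ hR₂ hdisj hS₁ hS₂,
      range_union hR₁ hR₂ hdisj Finset.inter_subset_right Finset.inter_subset_right] at hlt
    rcases ssub_union_split hdc (range_sub hR₁ hS₁) (range_sub hR₂ hS₂)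
      (range_sub hR₁ Finset.inter_subset_right)
      (range_sub hR₂ Finset.inter_subset_right) hlt with h | h
    · exact hmax1 _ Finset.inter_subset_right hT1 h
    · exact hmax2 _ Finset.inter_subset_right hT2 h
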